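/- Let s ≥ 0, x₀ ≥ 0, and let F : ℝ → ℂ be measurable with M := ∫_{x₀}^∞ |F(t)| dt < 1 and W := ∫_{x₀}^∞ (1+x)^{2s} |F(x)|² dx < ∞. For x ≥ x₀ and n ≥ 1 set P_n(x) := ∫_{[0,∞)^{2n}} |F(x+t₁)| · ∏_{j=1}^{2n−1} |F(x+t_j+t_{j+1})| · |F(x+t_{2n})| dt. Then the series S(x) := Σ_{n=1}^∞ P_n(x) converges for almost every x > x₀, and ∫_{x₀}^∞ (1+x)^{2s} S(x)² dx ≤ (M²/(1−M²))² · W. Consequently the Gelfand–Levitan–Marchenko tail G(x) = Σ_{n=1}^∞ G_n(x), which satisfies |G(x)| ≤ S(x), belongs to the weighted space L^{2,s}(x₀, ∞) with ‖G‖_{L^{2,s}(x₀,∞)} ≤ (M²/(1−M²)) · W^{1/2}. -/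

import Mathlib

open MeasureTheory ENNReal

/-- `P_n(x) = ∫_{[0,∞)^{2n}} f(x+t₁) · ∏_{j=1}^{2n−1} f(x+t_j+t_{j+1}) · f(x+t_{2n}) dt`. -/
noncomputable def chainP (f : ℝ → ℝ) (n : ℕ) (hn : 1 ≤ n) (x : ℝ) : ℝ≥0∞ :=
  ∫⁻ t in {t : Fin (2 * n) → ℝ | ∀ i, 0 ≤ t i},
    ENNReal.ofReal (f (x + t ⟨0, by omega⟩)) *
    (∏ j : Fin (2 * n - 1),
      ENNReal.ofReal (f (x + t ⟨j.1, by have := j.isLt; omega⟩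
        + t ⟨j.1 + 1, by have := j.isLt; omega⟩))) *
    ENNReal.ofReal (f (x + t ⟨2 * n - 1, by omega⟩))

/-- `G_n(x) = ∫_{[0,∞)^{2n}} F(x+t₁) · ∏_{j=1}^{2n−1} F(x+t_j+t_{j+1}) · F(x+t_{2n}) dt`,
the `n`-th term of the multilinear expansion of the Gelfand–Levitan–Marchenko tail. -/
noncomputable def glmTerm (F : ℝ → ℂ) (n : ℕ) (hn : 1 ≤ n) (x : ℝ) : ℂ :=
  ∫ t in {t : Fin (2 * n) → ℝ | ∀ i, 0 ≤ t i},
    F (x + t ⟨0, by omega⟩) *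
    (∏ j : Fin (2 * n - 1),
      F (x + t ⟨j.1, by have := j.isLt; omega⟩ + t ⟨j.1 + 1, by have := j.isLt; omega⟩)) *
    F (x + t ⟨2 * n - 1, by omega⟩)

/-!
Write `g = ‖F‖` and `𝓗ₓ φ (a) = ∫_{b>0} g(x+a+b) φ(b)` for the Hankel operator on the half-line
with symbol `g(x + ·)`, so that `P_n(x) = 𝓗ₓ^{2n} g(x + ·) (0)`. The operator `𝓗ₓ` is symmetric
and multiplies `∫_{(0,∞)}` by at most `M` when `x ≥ x₀`. Since the weight `w = (1+·)^s` is
increasing, `w(x) P_n(x) ≤ ∫ (w g)(x+a) T_x(a) da` with `T_x = 𝓗ₓ^{2n-1} g(x + ·)`, and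
Cauchy–Schwarz against the measure `T_x(a) da`, of mass at most `M^{2n}`, reduces the weighted
`L²` bound to `∫_{x>x₀} T_x(y - x) dx ≤ M^{2n}` for every `y > x₀`. By symmetry
`T_x(y - x) = 𝓗ₓ^{2n-1} g(y + ·) (0)`, and integrating out two kernels at a time (the change of
variables `p = x + a` absorbs one kernel, the mass bound the next) gives the estimate.
Hence `‖w P_n‖_{L²} ≤ M^{2n} W^{1/2}`, and Minkowski's inequality sums the geometric series.
-/

open Set

section LIntegral

variable {α : Type*} [MeasurableSpace α] {μ : Measure α}

theorem lintegral_mul_sq_le {φ ψ : α → ℝ≥0∞} (hφ : AEMeasurable φ μ) (hψ : AEMeasurable ψ μ) :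
    (∫⁻ x, φ x * ψ x ∂μ) ^ 2 ≤ (∫⁻ x, φ x ^ 2 * ψ x ∂μ) * ∫⁻ x, ψ x ∂μ := by
  have hsqrt : ∀ a : ℝ≥0∞, (a ^ (2⁻¹ : ℝ)) ^ 2 = a := fun a => by
    rw [← rpow_ofNat, rpow_inv_rpow two_ne_zero]
  have hsplit : ∀ x, (φ x ^ 2 * ψ x) ^ (2⁻¹ : ℝ) * ψ x ^ (2⁻¹ : ℝ) = φ x * ψ x := fun x => by
    rw [mul_rpow_of_nonneg _ _ (by norm_num), mul_assoc, ← sq, hsqrt, ← rpow_ofNat,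
      ← rpow_mul, mul_inv_cancel₀ two_ne_zero, rpow_one]
  have hCS := lintegral_mul_norm_pow_le (f := fun x => φ x ^ 2 * ψ x) ((hφ.pow_const 2).mul hψ)
    hψ (p := 2⁻¹) (q := 2⁻¹) (by norm_num) (by norm_num) (by norm_num)
  simp only [hsplit] at hCS
  calc (∫⁻ x, φ x * ψ x ∂μ) ^ 2
      ≤ ((∫⁻ x, φ x ^ 2 * ψ x ∂μ) ^ (2⁻¹ : ℝ) * (∫⁻ x, ψ x ∂μ) ^ (2⁻¹ : ℝ)) ^ 2 := by gcongr
    _ = (∫⁻ x, φ x ^ 2 * ψ x ∂μ) * ∫⁻ x, ψ x ∂μ := by rw [mul_pow, hsqrt, hsqrt]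

theorem sq_eLpNorm_two (v : α → ℝ≥0∞) : eLpNorm v 2 μ ^ 2 = ∫⁻ x, v x ^ 2 ∂μ := by
  rw [eLpNorm_eq_lintegral_rpow_enorm_toReal two_ne_zero ofNat_ne_top]
  simp only [toReal_ofNat, enorm_eq_self, one_div, rpow_ofNat]
  rw [← rpow_ofNat, rpow_inv_rpow two_ne_zero]

theorem lintegral_sq_tsum_le {u : ℕ → α → ℝ≥0∞} (hu : ∀ n, AEMeasurable (u n) μ)
    {c : ℕ → ℝ≥0∞} (hc : ∀ n, ∫⁻ x, u n x ^ 2 ∂μ ≤ c n ^ 2) :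
    ∫⁻ x, (∑' n, u n x) ^ 2 ∂μ ≤ (∑' n, c n) ^ 2 := by
  have hpartial : ∀ N, ∫⁻ x, (∑ n ∈ Finset.range N, u n x) ^ 2 ∂μ ≤ (∑' n, c n) ^ 2 := by
    intro N
    have hle : eLpNorm (∑ n ∈ Finset.range N, u n) 2 μ ≤ ∑' n, c n := by
      refine (eLpNorm_sum_le (fun n _ => (hu n).aestronglyMeasurable) one_le_two).trans ?_
      refine (Finset.sum_le_sum fun n _ => ?_).trans (ENNReal.sum_le_tsum _)
      rw [← ENNReal.pow_le_pow_left_iff two_ne_zero, sq_eLpNorm_two]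
      exact hc n
    rw [← ENNReal.pow_le_pow_left_iff two_ne_zero, sq_eLpNorm_two] at hle
    simpa only [Finset.sum_apply] using hle
  calc ∫⁻ x, (∑' n, u n x) ^ 2 ∂μ
      = ∫⁻ x, ⨆ N, (∑ n ∈ Finset.range N, u n x) ^ 2 ∂μ := by
        simp_rw [ENNReal.tsum_eq_iSup_nat, ENNReal.iSup_pow]
    _ = ⨆ N, ∫⁻ x, (∑ n ∈ Finset.range N, u n x) ^ 2 ∂μ :=
        lintegral_iSup' (fun N => (Finset.aemeasurable_fun_sum _ fun n _ => hu n).pow_const 2)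
          (Filter.Eventually.of_forall fun x N K hNK =>
            pow_le_pow_left' (Finset.sum_le_sum_of_subset (Finset.range_subset_range.2 hNK)) 2)
    _ ≤ (∑' n, c n) ^ 2 := iSup_le hpartial

theorem ae_lt_top_of_lintegral_mul_sq_ne_top {c S : α → ℝ≥0∞} (hc : AEMeasurable c μ)
    (hS : AEMeasurable S μ) (hc0 : ∀ᵐ x ∂μ, c x ≠ 0) (h : ∫⁻ x, c x * S x ^ 2 ∂μ ≠ ⊤) :
    ∀ᵐ x ∂μ, S x < ⊤ := by
  filter_upwards [ae_lt_top' (hc.mul (hS.pow_const 2)) h, hc0] with x hx hcx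
  rw [lt_top_iff_ne_top]
  rintro hSx
  simp [hSx, ENNReal.mul_top hcx] at hx

end LIntegral

theorem setLIntegral_Ioi_comp_add_right (φ : ℝ → ℝ≥0∞) (t c : ℝ) :
    ∫⁻ a in Ioi t, φ (a + c) = ∫⁻ y in Ioi (t + c), φ y := by
  rw [(measurePreserving_add_right volume c).setLIntegral_comp_emb
    (measurableEmbedding_addRight c), image_add_const_Ioi]

theorem setLIntegral_Ioi_comp_add_right_le (φ : ℝ → ℝ≥0∞) {t c x₀ : ℝ} (h : x₀ ≤ t + c) :
    ∫⁻ a in Ioi t, φ (a + c) ≤ ∫⁻ y in Ioi x₀, φ y := by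
  rw [setLIntegral_Ioi_comp_add_right]
  exact lintegral_mono_set (Ioi_subset_Ioi h)

theorem setLIntegral_Ioi_lintegral_Ioi_shear_le {Φ : ℝ → ℝ → ℝ≥0∞}
    (hΦ : Measurable (Function.uncurry Φ)) (x₀ c : ℝ) :
    ∫⁻ x in Ioi x₀, ∫⁻ d in Ioi 0, Φ x (d + (x + c))
      ≤ ∫⁻ p in Ioi (x₀ + c), ∫⁻ x in Ioi x₀, Φ x p := by
  rw [← lintegral_lintegral_swap hΦ.aemeasurable]
  refine setLIntegral_mono' measurableSet_Ioi fun x hx => ?_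
  rw [setLIntegral_Ioi_comp_add_right, zero_add]
  exact lintegral_mono_set (Ioi_subset_Ioi (by simp only [mem_Ioi] at hx; linarith))

theorem lintegral_pi_fin_succ {ν : Measure ℝ} [SigmaFinite ν] {m : ℕ}
    {Ψ : (Fin (m + 1) → ℝ) → ℝ≥0∞} (hΨ : Measurable Ψ) :
    ∫⁻ t, Ψ t ∂(Measure.pi fun _ => ν)
      = ∫⁻ a, ∫⁻ s, Ψ (Fin.cons a s) ∂(Measure.pi fun _ => ν) ∂ν := by
  rw [← ((measurePreserving_piFinSuccAbove (fun _ => ν) 0).symm).lintegral_comp hΨ,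
    lintegral_prod]
  · simp [MeasurableEquiv.piFinSuccAbove_symm_apply, Fin.insertNthEquiv]
  · exact (hΨ.comp (MeasurableEquiv.measurable _)).aemeasurable

theorem volume_restrict_orthant (m : ℕ) :
    volume.restrict {t : Fin m → ℝ | ∀ i, 0 ≤ t i}
      = Measure.pi fun _ => volume.restrict (Ioi 0) := by
  have horthant : {t : Fin m → ℝ | ∀ i, 0 ≤ t i} = univ.pi fun _ => Ici 0 := by
    ext t
    simp only [mem_ofPred_eq, mem_univ_pi, mem_Ici]
  rw [horthant, volume_pi, Measure.restrict_pi_pi, Measure.restrict_congr_set Ioi_ae_eq_Ici]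

noncomputable def hankelOp (k φ : ℝ → ℝ≥0∞) (a : ℝ) : ℝ≥0∞ :=
  ∫⁻ b in Ioi 0, k (a + b) * φ b

section hankelOp

variable {k : ℝ → ℝ≥0∞}

theorem measurable_hankelOp_iterate {X : Type*} [MeasurableSpace X] {k φ : X → ℝ → ℝ≥0∞}
    (hk : Measurable (Function.uncurry k)) (hφ : Measurable (Function.uncurry φ)) (m : ℕ) :
    Measurable (Function.uncurry fun x => (hankelOp (k x))^[m] (φ x)) := by
  induction m with
  | zero => exact hφ
  | succ m ih =>
    simp only [Function.iterate_succ_apply']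
    refine Measurable.lintegral_prod_right' (f := fun q : (X × ℝ) × ℝ =>
      k q.1.1 (q.1.2 + q.2) * (hankelOp (k q.1.1))^[m] (φ q.1.1) q.2) ?_
    exact (hk.comp (show Measurable fun q : (X × ℝ) × ℝ => (q.1.1, q.1.2 + q.2) by fun_prop)).mul
      (ih.comp (show Measurable fun q : (X × ℝ) × ℝ => (q.1.1, q.2) by fun_prop))

theorem Measurable.hankelOp_iterate {φ : ℝ → ℝ≥0∞} (hφ : Measurable φ) (hk : Measurable k)
    (m : ℕ) : Measurable ((hankelOp k)^[m] φ) :=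
  (measurable_hankelOp_iterate (k := fun _ : Unit => k) (φ := fun _ => φ)
    (hk.comp measurable_snd) (hφ.comp measurable_snd) m).comp (measurable_prodMk_left (x := ()))

theorem lintegral_hankelOp_le {φ : ℝ → ℝ≥0∞} (hk : Measurable k) (hφ : Measurable φ) :
    ∫⁻ a in Ioi 0, hankelOp k φ a ≤ (∫⁻ y in Ioi 0, k y) * ∫⁻ b in Ioi 0, φ b := by
  unfold hankelOp
  rw [lintegral_lintegral_swap ((hk.comp measurable_add).mul (hφ.comp measurable_snd)).aemeasurable,
    ← lintegral_const_mul _ hφ]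
  refine setLIntegral_mono' measurableSet_Ioi fun b hb => ?_
  rw [lintegral_mul_const _ (show Measurable fun a => k (a + b) by fun_prop)]
  gcongr ?_ * _
  exact setLIntegral_Ioi_comp_add_right_le k (by simpa using hb.le)

theorem lintegral_hankelOp_iterate_le {φ : ℝ → ℝ≥0∞} (hk : Measurable k) (hφ : Measurable φ)
    (m : ℕ) :
    ∫⁻ a in Ioi 0, (hankelOp k)^[m] φ a ≤ (∫⁻ y in Ioi 0, k y) ^ m * ∫⁻ b in Ioi 0, φ b := by
  induction m with
  | zero => simp
  | succ m ih =>
    rw [Function.iterate_succ_apply', pow_succ', mul_assoc]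
    exact (lintegral_hankelOp_le hk (hφ.hankelOp_iterate hk m)).trans (by gcongr)

theorem lintegral_mul_hankelOp_comm {φ ψ : ℝ → ℝ≥0∞} (hk : Measurable k) (hφ : Measurable φ)
    (hψ : Measurable ψ) :
    ∫⁻ a in Ioi 0, φ a * hankelOp k ψ a = ∫⁻ a in Ioi 0, hankelOp k φ a * ψ a := by
  unfold hankelOp
  calc ∫⁻ a in Ioi 0, φ a * ∫⁻ b in Ioi 0, k (a + b) * ψ b
      = ∫⁻ a in Ioi 0, ∫⁻ b in Ioi 0, φ a * (k (a + b) * ψ b) :=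
        lintegral_congr fun a => (lintegral_const_mul _ (by fun_prop)).symm
    _ = ∫⁻ b in Ioi 0, ∫⁻ a in Ioi 0, φ a * (k (a + b) * ψ b) :=
        lintegral_lintegral_swap (by fun_prop)
    _ = ∫⁻ b in Ioi 0, (∫⁻ a in Ioi 0, k (b + a) * φ a) * ψ b := by
        refine lintegral_congr fun b => ?_
        rw [← lintegral_mul_const _ (by fun_prop)]
        refine lintegral_congr fun a => ?_
        rw [add_comm b a]
        ring

theorem lintegral_mul_hankelOp_iterate_comm {φ ψ : ℝ → ℝ≥0∞} (hk : Measurable k)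
    (hφ : Measurable φ) (hψ : Measurable ψ) (m : ℕ) :
    ∫⁻ a in Ioi 0, φ a * (hankelOp k)^[m] ψ a = ∫⁻ a in Ioi 0, (hankelOp k)^[m] φ a * ψ a := by
  induction m generalizing ψ with
  | zero => rfl
  | succ m ih =>
    rw [Function.iterate_succ_apply, ih (ψ := hankelOp k ψ) (hψ.hankelOp_iterate hk 1),
      lintegral_mul_hankelOp_comm hk (hφ.hankelOp_iterate hk m) hψ, Function.iterate_succ_apply']

theorem hankelOp_iterate_succ_symm (hk : Measurable k) (m : ℕ) (a c : ℝ) :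
    (hankelOp k)^[m + 1] (fun b => k (c + b)) a
      = (hankelOp k)^[m + 1] (fun b => k (a + b)) c := by
  simp only [Function.iterate_succ_apply', hankelOp]
  rw [lintegral_mul_hankelOp_iterate_comm (φ := fun b => k (a + b)) (ψ := fun b => k (c + b)) hk
    (by fun_prop) (by fun_prop)]
  exact lintegral_congr fun b => mul_comm _ _

theorem lintegral_chain_eq_hankelOp_iterate {φ : ℝ → ℝ≥0∞} (hk : Measurable k)
    (hφ : Measurable φ) (m : ℕ) (c : ℝ) :
    ∫⁻ s : Fin (m + 1) → ℝ,
        k (c + s 0) * (∏ j : Fin m, k (s j.castSucc + s j.succ)) * φ (s (Fin.last m))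
        ∂(Measure.pi fun _ => volume.restrict (Ioi 0))
      = (hankelOp k)^[m + 1] φ c := by
  induction m generalizing c with
  | zero =>
    rw [lintegral_pi_fin_succ (by fun_prop)]
    simp [hankelOp]
  | succ m ih =>
    rw [lintegral_pi_fin_succ (by fun_prop), Function.iterate_succ_apply', hankelOp]
    refine lintegral_congr fun a => ?_
    simp only [Fin.cons_zero, Fin.prod_univ_succ, Fin.castSucc_zero, Fin.cons_succ,
      ← Fin.succ_castSucc, ← Fin.succ_last]
    rw [← ih a, ← lintegral_const_mul _ (by fun_prop)]
    refine lintegral_congr fun s => ?_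
    ring

end hankelOp

section shiftHankel

variable {g : ℝ → ℝ≥0∞} {x₀ : ℝ}

local notation "𝓗" x:max => hankelOp (fun y => g (x + y))

theorem measurable_shiftHankel_iterate (hg : Measurable g) {φ : ℝ → ℝ → ℝ≥0∞}
    (hφ : Measurable (Function.uncurry φ)) (m : ℕ) :
    Measurable (Function.uncurry fun x => (𝓗 x)^[m] (φ x)) :=
  measurable_hankelOp_iterate (k := fun x y => g (x + y)) (hg.comp measurable_add) hφ m

theorem measurable_shiftHankel_iterate_self (hg : Measurable g) (m : ℕ) (a : ℝ) :
    Measurable fun x => (𝓗 x)^[m] (fun b => g (x + b)) a :=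
  (measurable_shiftHankel_iterate hg (φ := fun x b => g (x + b)) (by fun_prop) m).comp
    (measurable_id.prodMk (measurable_const (a := a)))

theorem setLIntegral_Ioi_zero_comp_const_add_le {x : ℝ} (hx : x₀ ≤ x) :
    ∫⁻ a in Ioi 0, g (x + a) ≤ ∫⁻ y in Ioi x₀, g y := by
  simpa only [add_comm x] using setLIntegral_Ioi_comp_add_right_le g (t := 0) (by simpa using hx)

theorem lintegral_shiftHankel_iterate_le (hg : Measurable g) {x : ℝ} (hx : x₀ ≤ x) (m : ℕ) :
    ∫⁻ a in Ioi 0, (𝓗 x)^[m] (fun b => g (x + b)) a ≤ (∫⁻ y in Ioi x₀, g y) ^ (m + 1) := by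
  refine (lintegral_hankelOp_iterate_le (by fun_prop) (by fun_prop) m).trans ?_
  have hM := setLIntegral_Ioi_zero_comp_const_add_le (g := g) hx
  rw [pow_succ]
  exact mul_le_mul' (pow_le_pow_left' hM m) hM

theorem setLIntegral_lintegral_mul_le (hg : Measurable g) {T : ℝ → ℝ → ℝ≥0∞}
    (hT : Measurable (Function.uncurry T)) {C : ℝ≥0∞}
    (hC : ∀ b ∈ Ioi (0 : ℝ), ∫⁻ x in Ioi x₀, T x b ≤ C) {c : ℝ} (hc : x₀ ≤ c) :
    ∫⁻ x in Ioi x₀, ∫⁻ b in Ioi 0, g (b + c) * T x b ≤ (∫⁻ y in Ioi x₀, g y) * C := by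
  have hgT : Measurable (Function.uncurry fun x b => g (b + c) * T x b) :=
    (by fun_prop : Measurable fun q : ℝ × ℝ => g (q.2 + c)).mul hT
  calc ∫⁻ x in Ioi x₀, ∫⁻ b in Ioi 0, g (b + c) * T x b
      = ∫⁻ b in Ioi 0, g (b + c) * ∫⁻ x in Ioi x₀, T x b := by
        rw [lintegral_lintegral_swap hgT.aemeasurable]
        refine lintegral_congr fun b => lintegral_const_mul _ ?_
        exact hT.comp (by fun_prop : Measurable fun x : ℝ => (x, b))
    _ ≤ ∫⁻ b in Ioi 0, g (b + c) * C :=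
        setLIntegral_mono' measurableSet_Ioi fun b hb => by gcongr; exact hC b hb
    _ ≤ (∫⁻ y in Ioi x₀, g y) * C := by
        rw [lintegral_mul_const _ (by fun_prop)]
        gcongr ?_ * _
        exact setLIntegral_Ioi_comp_add_right_le g (by linarith)

theorem lintegral_shiftHankel_le (hg : Measurable g) {ψ : ℝ → ℝ≥0∞} (hψ : Measurable ψ)
    {γ : ℝ} (hγ : 0 ≤ γ) :
    ∫⁻ x in Ioi x₀, (𝓗 x) ψ γ ≤ (∫⁻ y in Ioi x₀, g y) * ∫⁻ b in Ioi 0, ψ b := by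
  simp only [hankelOp]
  rw [lintegral_lintegral_swap (by fun_prop), ← lintegral_const_mul _ hψ]
  refine setLIntegral_mono' measurableSet_Ioi fun d hd => ?_
  rw [lintegral_mul_const _ (by fun_prop)]
  gcongr ?_ * _
  exact setLIntegral_Ioi_comp_add_right_le g (by simp only [mem_Ioi] at hd; linarith)

theorem lintegral_shiftHankel_iterate_add_two_le (hg : Measurable g) {ψ : ℝ → ℝ≥0∞}
    (hψ : Measurable ψ) (m : ℕ) {C : ℝ≥0∞}
    (hC : ∀ b ∈ Ioi (0 : ℝ), ∫⁻ x in Ioi x₀, (𝓗 x)^[m] ψ b ≤ C) {γ : ℝ} (hγ : 0 ≤ γ) :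
    ∫⁻ x in Ioi x₀, (𝓗 x)^[m + 2] ψ γ ≤ (∫⁻ y in Ioi x₀, g y) ^ 2 * C := by
  set M := ∫⁻ y in Ioi x₀, g y
  set T : ℝ → ℝ → ℝ≥0∞ := fun x => (𝓗 x)^[m] ψ
  have hT : Measurable (Function.uncurry T) :=
    measurable_shiftHankel_iterate hg (φ := fun _ => ψ) (hψ.comp measurable_snd) m
  set Φ : ℝ → ℝ → ℝ≥0∞ := fun x p => g p * ∫⁻ b in Ioi 0, g (b + (p - γ)) * T x b
  have hΦ : Measurable (Function.uncurry Φ) := by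
    refine (hg.comp measurable_snd).mul (Measurable.lintegral_prod_right'
      (f := fun q : (ℝ × ℝ) × ℝ => g (q.2 + (q.1.2 - γ)) * T q.1.1 q.2) ?_)
    exact (by fun_prop : Measurable fun q : (ℝ × ℝ) × ℝ => g (q.2 + (q.1.2 - γ))).mul
      (hT.comp (by fun_prop : Measurable fun q : (ℝ × ℝ) × ℝ => (q.1.1, q.2)))
  have hunfold : ∀ x, (𝓗 x)^[m + 2] ψ γ = ∫⁻ d in Ioi 0, Φ x (d + (x + γ)) := fun x => by
    rw [Function.iterate_succ_apply', Function.iterate_succ_apply']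
    refine lintegral_congr fun d => ?_
    simp only [Φ, hankelOp, T]
    ring_nf
  have hinner : ∀ p ∈ Ioi (x₀ + γ), ∫⁻ x in Ioi x₀, Φ x p ≤ g p * (M * C) := fun p hp => by
    have hI : Measurable fun x => ∫⁻ b in Ioi 0, g (b + (p - γ)) * T x b :=
      ((by fun_prop : Measurable fun q : ℝ × ℝ => g (q.2 + (p - γ))).mul hT).lintegral_prod_right'
    rw [lintegral_const_mul _ hI]
    gcongr g p * ?_
    exact setLIntegral_lintegral_mul_le hg hT hC (by simp only [mem_Ioi] at hp; linarith)
  calc ∫⁻ x in Ioi x₀, (𝓗 x)^[m + 2] ψ γ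
      = ∫⁻ x in Ioi x₀, ∫⁻ d in Ioi 0, Φ x (d + (x + γ)) := lintegral_congr hunfold
    _ ≤ ∫⁻ p in Ioi (x₀ + γ), ∫⁻ x in Ioi x₀, Φ x p :=
        setLIntegral_Ioi_lintegral_Ioi_shear_le hΦ x₀ γ
    _ ≤ ∫⁻ p in Ioi (x₀ + γ), g p * (M * C) := setLIntegral_mono' measurableSet_Ioi hinner
    _ ≤ M ^ 2 * C := by
        rw [lintegral_mul_const _ hg, sq, mul_assoc]
        gcongr ?_ * _
        exact lintegral_mono_set (Ioi_subset_Ioi (by linarith))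

theorem lintegral_shiftHankel_iterate_odd_le (hg : Measurable g) {u : ℝ} (hu : x₀ ≤ u) (k : ℕ)
    {γ : ℝ} (hγ : 0 ≤ γ) :
    ∫⁻ x in Ioi x₀, (𝓗 x)^[2 * k + 1] (fun b => g (u + b)) γ
      ≤ (∫⁻ y in Ioi x₀, g y) ^ (2 * k + 2) := by
  induction k generalizing γ with
  | zero =>
    refine (lintegral_shiftHankel_le hg (by fun_prop) hγ).trans ?_
    rw [pow_two]
    gcongr _ * ?_
    exact setLIntegral_Ioi_zero_comp_const_add_le hu
  | succ k ih =>
    rw [show 2 * (k + 1) + 1 = 2 * k + 1 + 2 by ring]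
    refine (lintegral_shiftHankel_iterate_add_two_le hg (by fun_prop) _
      (fun b hb => ih (le_of_lt hb)) hγ).trans_eq ?_
    ring

theorem shiftHankel_iterate_succ_sub (hg : Measurable g) (m : ℕ) (x p : ℝ) :
    (𝓗 x)^[m + 1] (fun b => g (x + b)) (p - x) = (𝓗 x)^[m + 1] (fun b => g (p + b)) 0 := by
  have := hankelOp_iterate_succ_symm (k := fun y => g (x + y)) (by fun_prop) m (p - x) 0
  simpa only [add_zero, zero_add, ← add_assoc, add_sub_cancel] using this

theorem lintegral_lintegral_mul_shiftHankel_iterate_odd_le (hg : Measurable g)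
    {ρ : ℝ → ℝ≥0∞} (hρ : Measurable ρ) (k : ℕ) :
    ∫⁻ x in Ioi x₀, ∫⁻ a in Ioi 0, ρ (a + x) * (𝓗 x)^[2 * k + 1] (fun b => g (x + b)) a
      ≤ (∫⁻ y in Ioi x₀, g y) ^ (2 * k + 2) * ∫⁻ y in Ioi x₀, ρ y := by
  set T : ℝ → ℝ → ℝ≥0∞ := fun x => (𝓗 x)^[2 * k + 1] (fun b => g (x + b))
  have hT : Measurable (Function.uncurry T) :=
    measurable_shiftHankel_iterate hg (φ := fun x b => g (x + b)) (by fun_prop) _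
  have hΦ : Measurable (Function.uncurry fun x p => ρ p * T x (p - x)) :=
    (hρ.comp measurable_snd).mul
      (hT.comp (by fun_prop : Measurable fun q : ℝ × ℝ => (q.1, q.2 - q.1)))
  calc ∫⁻ x in Ioi x₀, ∫⁻ a in Ioi 0, ρ (a + x) * T x a
      = ∫⁻ x in Ioi x₀, ∫⁻ a in Ioi 0, ρ (a + (x + 0)) * T x (a + (x + 0) - x) := by
        simp only [add_zero, add_sub_cancel_right]
    _ ≤ ∫⁻ p in Ioi (x₀ + 0), ∫⁻ x in Ioi x₀, ρ p * T x (p - x) :=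
        setLIntegral_Ioi_lintegral_Ioi_shear_le hΦ x₀ 0
    _ ≤ ∫⁻ p in Ioi x₀, ρ p * (∫⁻ y in Ioi x₀, g y) ^ (2 * k + 2) := by
        rw [add_zero]
        refine setLIntegral_mono' measurableSet_Ioi fun p hp => ?_
        have hTp : Measurable fun x => T x (p - x) :=
          hT.comp (by fun_prop : Measurable fun x : ℝ => (x, p - x))
        rw [lintegral_const_mul _ hTp]
        gcongr ρ p * ?_
        simp only [T, shiftHankel_iterate_succ_sub hg]
        exact lintegral_shiftHankel_iterate_odd_le hg (le_of_lt hp) k le_rfl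
    _ = (∫⁻ y in Ioi x₀, g y) ^ (2 * k + 2) * ∫⁻ y in Ioi x₀, ρ y := by
        rw [lintegral_mul_const _ hρ, mul_comm]

theorem sq_mul_shiftHankel_iterate_le (hg : Measurable g) {w : ℝ → ℝ≥0∞} (hw : Measurable w)
    (hmono : MonotoneOn w (Ioi x₀)) (k : ℕ) {x : ℝ} (hx : x₀ < x) :
    (w x * (𝓗 x)^[2 * k + 2] (fun b => g (x + b)) 0) ^ 2
      ≤ (∫⁻ y in Ioi x₀, g y) ^ (2 * k + 2) *
        ∫⁻ a in Ioi 0, (w (a + x) * g (a + x)) ^ 2 * (𝓗 x)^[2 * k + 1] (fun b => g (x + b)) a := by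
  have hT : Measurable ((𝓗 x)^[2 * k + 1] (fun b => g (x + b))) :=
    Measurable.hankelOp_iterate (by fun_prop) (by fun_prop) _
  have hweight : w x * (𝓗 x)^[2 * k + 2] (fun b => g (x + b)) 0
      ≤ ∫⁻ a in Ioi 0, w (a + x) * g (a + x) * (𝓗 x)^[2 * k + 1] (fun b => g (x + b)) a := by
    rw [Function.iterate_succ_apply', hankelOp,
      ← lintegral_const_mul _ ((show Measurable fun b => g (x + (0 + b)) by fun_prop).fun_mul hT)]
    refine setLIntegral_mono' measurableSet_Ioi fun a ha => ?_
    have hxa : x ≤ a + x := by simp only [mem_Ioi] at ha; linarith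
    rw [zero_add, add_comm x a, ← mul_assoc]
    gcongr
    exact hmono hx (mem_Ioi.2 (hx.trans_le hxa)) hxa
  set T := (𝓗 x)^[2 * k + 1] (fun b => g (x + b))
  calc (w x * (𝓗 x)^[2 * k + 2] (fun b => g (x + b)) 0) ^ 2
      ≤ (∫⁻ a in Ioi 0, w (a + x) * g (a + x) * T a) ^ 2 := by gcongr
    _ ≤ (∫⁻ a in Ioi 0, (w (a + x) * g (a + x)) ^ 2 * T a) * ∫⁻ a in Ioi 0, T a :=
        lintegral_mul_sq_le (by fun_prop) hT.aemeasurable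
    _ ≤ (∫⁻ y in Ioi x₀, g y) ^ (2 * k + 2) *
        ∫⁻ a in Ioi 0, (w (a + x) * g (a + x)) ^ 2 * T a := by
        rw [mul_comm]
        gcongr
        exact lintegral_shiftHankel_iterate_le hg hx.le _

theorem lintegral_sq_mul_shiftHankel_iterate_le (hg : Measurable g) {w : ℝ → ℝ≥0∞}
    (hw : Measurable w) (hmono : MonotoneOn w (Ioi x₀)) (k : ℕ) :
    ∫⁻ x in Ioi x₀, (w x * (𝓗 x)^[2 * k + 2] (fun b => g (x + b)) 0) ^ 2
      ≤ ((∫⁻ y in Ioi x₀, g y) ^ (2 * k + 2)) ^ 2 * ∫⁻ y in Ioi x₀, (w y * g y) ^ 2 := by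
  have hmeas : Measurable fun x => ∫⁻ a in Ioi 0,
      (w (a + x) * g (a + x)) ^ 2 * (𝓗 x)^[2 * k + 1] (fun b => g (x + b)) a :=
    Measurable.lintegral_prod_right' (f := fun q : ℝ × ℝ => (w (q.2 + q.1) * g (q.2 + q.1)) ^ 2 *
      (𝓗 q.1)^[2 * k + 1] (fun b => g (q.1 + b)) q.2) <|
        (by fun_prop : Measurable fun q : ℝ × ℝ => (w (q.2 + q.1) * g (q.2 + q.1)) ^ 2).mul
          (measurable_shiftHankel_iterate hg (φ := fun x b => g (x + b)) (by fun_prop)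
            (2 * k + 1))
  calc ∫⁻ x in Ioi x₀, (w x * (𝓗 x)^[2 * k + 2] (fun b => g (x + b)) 0) ^ 2
      ≤ ∫⁻ x in Ioi x₀, (∫⁻ y in Ioi x₀, g y) ^ (2 * k + 2) * ∫⁻ a in Ioi 0,
          (w (a + x) * g (a + x)) ^ 2 * (𝓗 x)^[2 * k + 1] (fun b => g (x + b)) a :=
        setLIntegral_mono' measurableSet_Ioi fun x hx =>
          sq_mul_shiftHankel_iterate_le hg hw hmono k hx
    _ ≤ ((∫⁻ y in Ioi x₀, g y) ^ (2 * k + 2)) ^ 2 * ∫⁻ y in Ioi x₀, (w y * g y) ^ 2 := by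
        rw [lintegral_const_mul _ hmeas, sq, mul_assoc]
        gcongr
        exact lintegral_lintegral_mul_shiftHankel_iterate_odd_le hg
          (ρ := fun y => (w y * g y) ^ 2) (by fun_prop) k

theorem lintegral_sq_mul_tsum_shiftHankel_iterate_le (hg : Measurable g) {w : ℝ → ℝ≥0∞}
    (hw : Measurable w) (hmono : MonotoneOn w (Ioi x₀)) :
    ∫⁻ x in Ioi x₀, (w x * ∑' n, (𝓗 x)^[2 * n + 2] (fun b => g (x + b)) 0) ^ 2
      ≤ ((∫⁻ y in Ioi x₀, g y) ^ 2 * (1 - (∫⁻ y in Ioi x₀, g y) ^ 2)⁻¹) ^ 2 *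
        ∫⁻ y in Ioi x₀, (w y * g y) ^ 2 := by
  set M := ∫⁻ y in Ioi x₀, g y
  set W := ∫⁻ y in Ioi x₀, (w y * g y) ^ 2
  have hsqrt : (W ^ (2⁻¹ : ℝ)) ^ 2 = W := by rw [← rpow_ofNat, rpow_inv_rpow two_ne_zero]
  have hgeom : ∑' n, M ^ (2 * n + 2) * W ^ (2⁻¹ : ℝ) = M ^ 2 * (1 - M ^ 2)⁻¹ * W ^ (2⁻¹ : ℝ) := by
    simp_rw [pow_add, pow_mul, ENNReal.tsum_mul_right, ENNReal.tsum_geometric]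
    ring
  calc ∫⁻ x in Ioi x₀, (w x * ∑' n, (𝓗 x)^[2 * n + 2] (fun b => g (x + b)) 0) ^ 2
      = ∫⁻ x in Ioi x₀, (∑' n, w x * (𝓗 x)^[2 * n + 2] (fun b => g (x + b)) 0) ^ 2 := by
        simp_rw [ENNReal.tsum_mul_left]
    _ ≤ (∑' n, M ^ (2 * n + 2) * W ^ (2⁻¹ : ℝ)) ^ 2 := by
        refine lintegral_sq_tsum_le
          (fun n => (hw.mul (measurable_shiftHankel_iterate_self hg _ 0)).aemeasurable) fun n => ?_
        rw [mul_pow, hsqrt]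
        exact lintegral_sq_mul_shiftHankel_iterate_le hg hw hmono n
    _ = (M ^ 2 * (1 - M ^ 2)⁻¹) ^ 2 * W := by rw [hgeom, mul_pow, hsqrt]

end shiftHankel

theorem chainP_eq_hankelOp_iterate {f : ℝ → ℝ} (hf : Measurable f) (n : ℕ) (x : ℝ) :
    chainP f (n + 1) (Nat.le_add_left 1 n) x
      = (hankelOp fun y => ENNReal.ofReal (f (x + y)))^[2 * n + 2]
          (fun b => ENNReal.ofReal (f (x + b))) 0 := by
  rw [← lintegral_chain_eq_hankelOp_iterate (by fun_prop) (by fun_prop), chainP,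
    volume_restrict_orthant]
  refine lintegral_congr fun t => ?_
  have hlast : (⟨2 * (n + 1) - 1, by omega⟩ : Fin (2 * (n + 1))) = Fin.last (2 * n + 1) :=
    Fin.ext (by simp only [Fin.val_last]; omega)
  simp only [zero_add, add_assoc, hlast]
  rfl

theorem measurable_chainP {f : ℝ → ℝ} (hf : Measurable f) (n : ℕ) :
    Measurable (chainP f (n + 1) (Nat.le_add_left 1 n)) := by
  simp_rw [funext (chainP_eq_hankelOp_iterate hf n)]
  exact measurable_shiftHankel_iterate_self hf.ennreal_ofReal _ 0

theorem ofReal_one_add_rpow_two_mul {s x : ℝ} (hx : -1 ≤ x) :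
    ENNReal.ofReal ((1 + x) ^ (2 * s)) = ENNReal.ofReal ((1 + x) ^ s) ^ 2 := by
  rw [mul_comm, Real.rpow_mul (by linarith), Real.rpow_two,
    ENNReal.ofReal_pow (Real.rpow_nonneg (by linarith) s)]

theorem lintegral_rpow_weight_mul_sq_tsum_chainP_le {f : ℝ → ℝ} (hf : Measurable f)
    {s x₀ : ℝ} (hs : 0 ≤ s) (hx₀ : -1 ≤ x₀) :
    ∫⁻ x in Ioi x₀, ENNReal.ofReal ((1 + x) ^ (2 * s)) *
        (∑' n, chainP f (n + 1) (Nat.le_add_left 1 n) x) ^ 2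
      ≤ ((∫⁻ y in Ioi x₀, ENNReal.ofReal (f y)) ^ 2 *
          (1 - (∫⁻ y in Ioi x₀, ENNReal.ofReal (f y)) ^ 2)⁻¹) ^ 2 *
        ∫⁻ y in Ioi x₀, ENNReal.ofReal ((1 + y) ^ (2 * s)) * ENNReal.ofReal (f y) ^ 2 := by
  have hweight : ∀ S : ℝ → ℝ≥0∞, ∫⁻ x in Ioi x₀, ENNReal.ofReal ((1 + x) ^ (2 * s)) * S x ^ 2
      = ∫⁻ x in Ioi x₀, (ENNReal.ofReal ((1 + x) ^ s) * S x) ^ 2 := fun S =>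
    setLIntegral_congr_fun measurableSet_Ioi fun x hx => by
      rw [ofReal_one_add_rpow_two_mul (hx₀.trans (le_of_lt hx)), mul_pow]
  have hmono : MonotoneOn (fun x => ENNReal.ofReal ((1 + x) ^ s)) (Ioi x₀) :=
    fun a ha b _ hab => ENNReal.ofReal_le_ofReal
      (Real.rpow_le_rpow (by simp only [mem_Ioi] at ha; linarith) (by linarith) hs)
  rw [hweight, hweight]
  simp_rw [chainP_eq_hankelOp_iterate hf]
  refine lintegral_sq_mul_tsum_shiftHankel_iterate_le hf.ennreal_ofReal ?_ hmono
  fun_prop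

theorem ofReal_setIntegral_rpow_weight_mul_sq {f : ℝ → ℝ} (hf0 : ∀ x, 0 ≤ f x) {s x₀ : ℝ}
    (hx₀ : -1 ≤ x₀) (hf : IntegrableOn (fun x => (1 + x) ^ (2 * s) * f x ^ 2) (Ioi x₀)) :
    ENNReal.ofReal (∫ x in Ioi x₀, (1 + x) ^ (2 * s) * f x ^ 2)
      = ∫⁻ x in Ioi x₀, ENNReal.ofReal ((1 + x) ^ (2 * s)) * ENNReal.ofReal (f x) ^ 2 := by
  have hweight : ∀ x ∈ Ioi x₀, 0 ≤ (1 + x) ^ (2 * s) := fun x hx =>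
    Real.rpow_nonneg (by simp only [mem_Ioi] at hx; linarith) _
  rw [ofReal_integral_eq_lintegral_ofReal hf (ae_restrict_of_forall_mem measurableSet_Ioi
    fun x hx => mul_nonneg (hweight x hx) (sq_nonneg _))]
  refine setLIntegral_congr_fun measurableSet_Ioi fun x hx => ?_
  rw [ENNReal.ofReal_mul (hweight x hx), ENNReal.ofReal_pow (hf0 x)]

theorem ofReal_sq_mul_inv_one_sub_sq {M : ℝ} (h0 : 0 ≤ M) (h1 : M < 1) :
    ENNReal.ofReal M ^ 2 * (1 - ENNReal.ofReal M ^ 2)⁻¹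
      = ENNReal.ofReal (M ^ 2 / (1 - M ^ 2)) := by
  have hpos : 0 < 1 - M ^ 2 := by nlinarith
  rw [div_eq_mul_inv, ENNReal.ofReal_mul (by positivity), ENNReal.ofReal_inv_of_pos hpos,
    ENNReal.ofReal_sub _ (by positivity), ENNReal.ofReal_one, ENNReal.ofReal_pow h0]

theorem enorm_glmTerm_le_chainP (F : ℝ → ℂ) (n : ℕ) (hn : 1 ≤ n) (x : ℝ) :
    ‖glmTerm F n hn x‖ₑ ≤ chainP (fun t => ‖F t‖) n hn x := by
  refine (enorm_integral_le_lintegral_enorm _).trans_eq (lintegral_congr fun t => ?_)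
  simp only [ofReal_norm, enorm_eq_nnnorm, nnnorm_mul, nnnorm_prod, ENNReal.coe_mul,
    ENNReal.ofNNReal_finsetProd]

theorem enorm_tsum_glmTerm_le (F : ℝ → ℂ) (x : ℝ) :
    ‖∑' n, glmTerm F (n + 1) (Nat.le_add_left 1 n) x‖ₑ
      ≤ ∑' n, chainP (fun t => ‖F t‖) (n + 1) (Nat.le_add_left 1 n) x :=
  enorm_tsum_le_tsum_enorm.trans (ENNReal.tsum_le_tsum fun _ => enorm_glmTerm_le_chainP F _ _ x)

/-- Let `M := ∫_{x₀}^∞ |F| < 1` and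
`W := ∫_{x₀}^∞ (1+x)^{2s}|F(x)|² dx < ∞` (with `s ≥ 0`, `x₀ ≥ 0`).  Then the series
`S(x) = Σ_{n≥1} P_n(x)` converges for a.e. `x > x₀`,
`∫_{x₀}^∞ (1+x)^{2s} S(x)² dx ≤ (M²/(1−M²))² W`, and consequently the
Gelfand–Levitan–Marchenko tail `G = Σ_{n≥1} G_n` satisfies
`∫_{x₀}^∞ (1+x)^{2s} |G(x)|² dx ≤ (M²/(1−M²))² W`, i.e. `G ∈ L^{2,s}(x₀,∞)` with
`‖G‖_{L^{2,s}(x₀,∞)} ≤ (M²/(1−M²)) W^{1/2}`. -/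
theorem glm_tail_weighted_bound (s : ℝ) (hs : 0 ≤ s) (x₀ : ℝ) (hx₀ : 0 ≤ x₀)
    (F : ℝ → ℂ) (hF : Measurable F)
    (hM : IntegrableOn F (Set.Ioi x₀))
    (hM1 : (∫ t in Set.Ioi x₀, ‖F t‖) < 1)
    (hW : IntegrableOn (fun x : ℝ => (1 + x) ^ (2 * s) * ‖F x‖ ^ 2)
      (Set.Ioi x₀)) :
    (∀ᵐ x ∂(volume.restrict (Set.Ioi x₀)),
      (∑' n : ℕ, chainP (fun t => ‖F t‖) (n + 1) (Nat.le_add_left 1 n) x) < ⊤) ∧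
    (∫⁻ x in Set.Ioi x₀, ENNReal.ofReal ((1 + x) ^ (2 * s)) *
        (∑' n : ℕ, chainP (fun t => ‖F t‖) (n + 1) (Nat.le_add_left 1 n) x) ^ 2)
      ≤ ENNReal.ofReal
          (((∫ t in Set.Ioi x₀, ‖F t‖) ^ 2 /
              (1 - (∫ t in Set.Ioi x₀, ‖F t‖) ^ 2)) ^ 2 *
            ∫ x in Set.Ioi x₀, (1 + x) ^ (2 * s) * ‖F x‖ ^ 2) ∧
    (∫⁻ x in Set.Ioi x₀, ENNReal.ofReal ((1 + x) ^ (2 * s)) *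
        ENNReal.ofReal (‖∑' n : ℕ, glmTerm F (n + 1) (Nat.le_add_left 1 n) x‖ ^ 2))
      ≤ ENNReal.ofReal
          (((∫ t in Set.Ioi x₀, ‖F t‖) ^ 2 /
              (1 - (∫ t in Set.Ioi x₀, ‖F t‖) ^ 2)) ^ 2 *
            ∫ x in Set.Ioi x₀, (1 + x) ^ (2 * s) * ‖F x‖ ^ 2) := by
  set M := ∫ t in Ioi x₀, ‖F t‖
  have hM0 : 0 ≤ M := integral_nonneg fun _ => norm_nonneg _
  have hbound := (lintegral_rpow_weight_mul_sq_tsum_chainP_le (f := fun t => ‖F t‖)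
    (by fun_prop) hs (x₀ := x₀) (by linarith)).trans_eq <| by
      rw [← ofReal_integral_eq_lintegral_ofReal hM.norm (ae_of_all _ fun _ => norm_nonneg _),
        ← ofReal_setIntegral_rpow_weight_mul_sq (fun _ => norm_nonneg _) (by linarith) hW,
        ofReal_sq_mul_inv_one_sub_sq hM0 hM1,
        ← ENNReal.ofReal_pow (div_nonneg (sq_nonneg M) (by nlinarith)),
        ← ENNReal.ofReal_mul (sq_nonneg _)]
  refine ⟨?_, hbound, le_trans (lintegral_mono fun x => ?_) hbound⟩
  · refine ae_lt_top_of_lintegral_mul_sq_ne_top (by fun_prop)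
      (Measurable.tsum fun n => measurable_chainP (by fun_prop) n).aemeasurable
      (ae_restrict_of_forall_mem measurableSet_Ioi fun x hx => ?_)
      (ne_top_of_le_ne_top ENNReal.ofReal_ne_top hbound)
    simp only [mem_Ioi] at hx
    exact (ENNReal.ofReal_pos.2 (Real.rpow_pos_of_pos (by linarith) _)).ne'
  · rw [ENNReal.ofReal_pow (norm_nonneg _), ofReal_norm]
    gcongr
    exact enorm_tsum_glmTerm_le F x
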